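/- Let 0 < p ≤ 1/2 and suppose the inequality ‖σ_n^κ f‖_{H_p} ≤ c_p n^{1/p−2} log^{2[1/2+p]}(n+1) ‖f‖_{H_p} holds for all f ∈ H_p (where [·] is the integer part). If f ∈ H_p satisfies ω_{H_p}(1/2^k, f) = o(2^{−k(1/p−2)}) as k → ∞ (for p < 1/2), then ‖σ_n^κ f − f‖_{H_p} → 0 as n → ∞. -/

import Mathlib

open MeasureTheory Filter Finset
open scoped ENNReal NNReal

/-- The Walsh group `G = ∏ ℤ₂`. -/
abbrev WG := ℕ → ZMod 2

noncomputable section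

/-- The `k`-th Rademacher function `r_k(x) = (-1)^{x_k}`. -/
def rad (k : ℕ) (x : WG) : ℝ := (-1 : ℝ) ^ (x k).val

/-- The Walsh-Paley function `w_n(x) = (-1)^{∑ n_k x_k}`. -/
def walsh (n : ℕ) (x : WG) : ℝ :=
  (-1 : ℝ) ^ (∑ k ∈ Finset.range (n + 1), if n.testBit k then (x k).val else 0)

/-- The Walsh-Kaczmarz function
`κ_n(x) = r_{|n|}(x)·(-1)^{∑_{k<|n|} n_k x_{|n|-1-k}}`, `κ_0 = 1`,
where `|n| = Nat.log 2 n` is the position of the leading binary digit. -/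
def kacz (n : ℕ) (x : WG) : ℝ :=
  if n = 0 then 1 else
    rad (Nat.log 2 n) x *
      (-1 : ℝ) ^ (∑ k ∈ Finset.range (Nat.log 2 n),
        if n.testBit k then (x (Nat.log 2 n - 1 - k)).val else 0)

/-- Walsh-Paley Dirichlet kernel. -/
def Dw (n : ℕ) (x : WG) : ℝ := ∑ k ∈ Finset.range n, walsh k x

/-- Walsh-Kaczmarz Dirichlet kernel. -/
def Dk (n : ℕ) (x : WG) : ℝ := ∑ k ∈ Finset.range n, kacz k x

/-- Walsh-Fejér kernel `K_n = (1/n) ∑_{k=1}^n D_k`. -/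
def Kw (n : ℕ) (x : WG) : ℝ := (1 / n : ℝ) * ∑ k ∈ Finset.Icc 1 n, Dw k x

/-- The transformation reversing the first `A` coordinates. -/
def tau (A : ℕ) (x : WG) : WG := fun k => if k < A then x (A - 1 - k) else x k

/-- The dyadic interval (cylinder) `I_n(x)`. -/
def cyl (n : ℕ) (x : WG) : Set WG := {y | ∀ k < n, y k = x k}

/-- `I_n = I_n(0)`. -/
def In (n : ℕ) : Set WG := cyl n 0

/-- A measure `μ` on `WG` is the Haar (product) measure iff every cylinder of
level `n` has measure `2⁻ⁿ`. -/
def IsHaar (μ : Measure WG) : Prop :=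
  ∀ (n : ℕ) (x : WG), μ (cyl n x) = (2 : ℝ≥0∞)⁻¹ ^ n

/-- Walsh-Fourier coefficient. -/
def fhatW (μ : Measure WG) (f : WG → ℝ) (j : ℕ) : ℝ := ∫ x, f x * walsh j x ∂μ

/-- Walsh-Fourier partial sum `S_N f`. -/
def partialW (μ : Measure WG) (N : ℕ) (f : WG → ℝ) (x : WG) : ℝ :=
  ∑ j ∈ Finset.range N, fhatW μ f j * walsh j x

/-- Walsh-Kaczmarz-Fourier coefficient. -/
def fhatK (μ : Measure WG) (f : WG → ℝ) (j : ℕ) : ℝ := ∫ x, f x * kacz j x ∂μ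

/-- Walsh-Kaczmarz-Fourier partial sum `S_N^κ f`. -/
def partialK (μ : Measure WG) (N : ℕ) (f : WG → ℝ) (x : WG) : ℝ :=
  ∑ j ∈ Finset.range N, fhatK μ f j * kacz j x

/-- Walsh-Kaczmarz-Fejér mean `σ_n^κ f`. -/
def sigmaK (μ : Measure WG) (n : ℕ) (f : WG → ℝ) (x : WG) : ℝ :=
  (1 / n : ℝ) * ∑ j ∈ Finset.Icc 1 n, partialK μ j f x

end

noncomputable section

/-- The `H_p` quasi-norm of a dyadic martingale: `‖sup_n |f^{(n)}|‖_p`. -/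
noncomputable def HpNorm (μ : Measure WG) (p : ℝ) (f : ℕ → WG → ℝ) : ℝ≥0∞ :=
  (∫⁻ x, (⨆ n, (‖f n x‖₊ : ℝ≥0∞)) ^ p ∂μ) ^ (1 / p)

/-- `f = (f^{(n)})_n` is a dyadic martingale: each `f^{(n)}` is integrable and
`S_{2^m} f^{(n)} = f^{(m)}` for `m ≤ n` (this encodes both `F_m`-measurability
of `f^{(m)}` and the martingale property). -/
def IsDyadicMartingale (μ : Measure WG) (f : ℕ → WG → ℝ) : Prop :=
  (∀ n, Integrable (f n) μ) ∧ ∀ m n, m ≤ n → ∀ x, partialW μ (2 ^ m) (f n) x = f m x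

/-- The `H_p` modulus of continuity `ω_{H_p}(1/2^k, f) = ‖f − S_{2^k}f‖_{H_p}`,
using that the martingale `f − S_{2^k}f` is `(f^{(m)} − f^{(min m k)})_m`. -/
noncomputable def omegaHp (μ : Measure WG) (p : ℝ) (f : ℕ → WG → ℝ) (k : ℕ) : ℝ≥0∞ :=
  HpNorm μ p (fun m x => f m x - f (min m k) x)

/-- Walsh-Kaczmarz-Fourier coefficient of a martingale:
`f̂(i) = ∫ f^{(k)} κ_i dμ` for any `k` with `2^k > i`; we take `k = i+1`. -/
noncomputable def fhatKMart (μ : Measure WG) (f : ℕ → WG → ℝ) (i : ℕ) : ℝ :=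
  ∫ x, f (i + 1) x * kacz i x ∂μ

/-- The Walsh-Kaczmarz-Fejér mean `σ_n^κ f` of a martingale `f`. -/
noncomputable def sigmaKMart (μ : Measure WG) (n : ℕ) (f : ℕ → WG → ℝ) (x : WG) : ℝ :=
  (1 / n : ℝ) * ∑ j ∈ Finset.Icc 1 n, ∑ i ∈ Finset.range j, fhatKMart μ f i * kacz i x

/-- The `H_p` quasi-norm of an integrable function `g`, via its martingale
`(S_{2^m} g)_m`. -/
noncomputable def HpNormFn (μ : Measure WG) (p : ℝ) (g : WG → ℝ) : ℝ≥0∞ :=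
  HpNorm μ p (fun m => partialW μ (2 ^ m) g)

/-- `‖g − f‖_{H_p}` for a function `g` and a martingale `f`, via the martingale
`(S_{2^m}g − f^{(m)})_m`. -/
noncomputable def HpDist (μ : Measure WG) (p : ℝ) (g : WG → ℝ) (f : ℕ → WG → ℝ) : ℝ≥0∞ :=
  HpNorm μ p (fun m x => partialW μ (2 ^ m) g x - f m x)


/-!
For `2^k < n ≤ 2^{k+1}`, the partial sum `S_{2^k} f` is a Kaczmarz polynomial of degree `< n`, and
`σ_n^κ f − f = (σ_n^κ − I)(f − S_{2^k} f) + (2^k/n) S_{2^k}(σ_{2^k}^κ f − f)`.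
This rests on the Kaczmarz functions of each dyadic block `[2^A, 2^{A+1})` being a permutation of
the Walsh functions of that block (reverse the binary digits below the leading one), so that
`S_{2^m}` acts on Kaczmarz polynomials by truncation.

For `p ≤ 1` the `p`-th power of the `H_p` quasi-norm is subadditive. By the assumed bound for
`σ_n^κ` the first term contributes `≲ (2^{k(1/p−2)} ω_{H_p}(2^{−k}, f))^p → 0`, and the second at
most `(2^k/n)^p u_k` with `u_k = ‖σ_{2^k}^κ f − f‖_{H_p}^p`. For `n = 2^{k+1}` this reads
`u_{k+1} ≤ b_k + 2^{−p} u_k` with `b_k → 0`, so `u_k → 0`, and then every `n` is controlled through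
its dyadic block.
-/

section

variable {μ : Measure WG} {p : ℝ} {f : ℕ → WG → ℝ}

def radProd (N : ℕ) (ε : ℕ → Bool) (x : WG) : ℝ :=
  ∏ k ∈ range N, if ε k then rad k x else 1

lemma radProd_eq_neg_one_pow (N : ℕ) (ε : ℕ → Bool) (x : WG) :
    radProd N ε x = (-1 : ℝ) ^ (∑ k ∈ range N, if ε k then (x k).val else 0) := by
  rw [← prod_pow_eq_pow_sum]
  refine prod_congr rfl fun k _ => ?_
  split <;> simp [rad]

lemma measurable_radProd (N : ℕ) (ε : ℕ → Bool) : Measurable (radProd N ε) := by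
  refine Finset.measurable_prod _ fun k _ => ?_
  split
  · exact (measurable_of_finite fun v : ZMod 2 => (-1 : ℝ) ^ v.val).comp (measurable_pi_apply k)
  · exact measurable_const

lemma abs_radProd (N : ℕ) (ε : ℕ → Bool) (x : WG) : |radProd N ε x| = 1 := by
  rw [radProd, abs_prod]
  refine prod_eq_one fun k _ => ?_
  split <;> simp [rad, abs_pow]

lemma radProd_mul_radProd (N : ℕ) (ε δ : ℕ → Bool) (x : WG) :
    radProd N ε x * radProd N δ x = radProd N (fun k => xor (ε k) (δ k)) x := by
  rw [radProd, radProd, radProd, ← prod_mul_distrib]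
  refine prod_congr rfl fun k _ => ?_
  cases ε k <;> cases δ k <;> simp [rad, ← mul_pow]

lemma radProd_of_le {N N' : ℕ} (h : N ≤ N') {ε : ℕ → Bool} (hε : ∀ k, N ≤ k → ε k = false)
    (x : WG) : radProd N' ε x = radProd N ε x := by
  refine (prod_subset (range_subset_range.2 h) fun k _ hk => ?_).symm
  simp [hε k (not_lt.1 (mem_range.not.1 hk))]

lemma IsHaar.isProbabilityMeasure (hμ : IsHaar μ) : IsProbabilityMeasure μ :=
  ⟨by simpa [cyl] using hμ 0 0⟩

lemma measurableSet_coords_eq (N : ℕ) (v : Fin N → ZMod 2) :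
    MeasurableSet {y : WG | ∀ k : Fin N, y k = v k} := by
  simp only [Set.ofPred_forall]
  exact MeasurableSet.iInter fun k => measurable_pi_apply _ (measurableSet_singleton _)

lemma IsHaar.measure_coords_eq (hμ : IsHaar μ) (N : ℕ) (v : Fin N → ZMod 2) :
    μ {y : WG | ∀ k : Fin N, y k = v k} = (2 : ℝ≥0∞)⁻¹ ^ N := by
  convert hμ N fun k => if h : k < N then v ⟨k, h⟩ else 0 using 2
  ext y
  exact ⟨fun hy k hk => by simpa [hk] using hy ⟨k, hk⟩, fun hy k => by simpa using hy k k.2⟩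

lemma IsHaar.integral_comp_coords (hμ : IsHaar μ) (N : ℕ) (H : (Fin N → ZMod 2) → ℝ) :
    ∫ x, H (fun k : Fin N => x k) ∂μ = (2 : ℝ)⁻¹ ^ N * ∑ v : Fin N → ZMod 2, H v := by
  have hH : (fun x : WG => H fun k : Fin N => x k) = fun x => ∑ v : Fin N → ZMod 2,
      {y : WG | ∀ k : Fin N, y k = v k}.indicator (fun _ => H v) x := by
    funext x
    rw [sum_eq_single (fun k : Fin N => x k)]
    · simp [Set.indicator]
    · intro v _ hv
      exact Set.indicator_of_notMem (fun hx => hv (funext fun k => (hx k).symm)) _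
    · simp
  have hmeas (v : Fin N → ZMod 2) : μ {y : WG | ∀ k : Fin N, y k = v k} ≠ ∞ := by
    simp [hμ.measure_coords_eq]
  rw [hH, integral_finsetSum _ fun v _ =>
    (integrable_indicator_iff (measurableSet_coords_eq N v)).2 (integrableOn_const (hmeas v)),
    mul_sum]
  refine sum_congr rfl fun v _ => ?_
  rw [integral_indicator_const _ (measurableSet_coords_eq N v), measureReal_def,
    hμ.measure_coords_eq, smul_eq_mul]
  simp [ENNReal.toReal_pow]

lemma IsHaar.integral_radProd (hμ : IsHaar μ) (N : ℕ) (ε : ℕ → Bool) :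
    ∫ x, radProd N ε x ∂μ = if ∀ k < N, ε k = false then 1 else 0 := by
  have hsum (k : ℕ) : ∑ b : ZMod 2, (if ε k then (-1 : ℝ) ^ b.val else 1)
      = if ε k then 0 else 2 := by
    cases ε k
    · norm_num
    · exact (Fin.sum_univ_two (fun b : Fin 2 => (-1 : ℝ) ^ b.val)).trans (by norm_num)
  have hH : radProd N ε = fun x => (fun v : Fin N → ZMod 2 =>
      ∏ k : Fin N, if ε k then (-1 : ℝ) ^ (v k).val else 1) fun k => x k :=
    funext fun x => (Fin.prod_univ_eq_prod_range (fun k => if ε k then rad k x else 1) N).symm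
  rw [hH, hμ.integral_comp_coords, ← Fintype.piFinset_univ,
    ← prod_univ_sum (t := fun _ => univ)
      (f := fun (k : Fin N) (b : ZMod 2) => if ε k then (-1 : ℝ) ^ b.val else 1)]
  simp only [hsum]
  split_ifs with hall
  · simp [fun k : Fin N => hall k k.2]
  · push Not at hall
    obtain ⟨k, hk, hεk⟩ := hall
    rw [prod_eq_zero (mem_univ ⟨k, hk⟩) (by simpa using hεk), mul_zero]

lemma walsh_eq_radProd {n N : ℕ} (h : n < N) (x : WG) : walsh n x = radProd N n.testBit x := by
  rw [radProd_of_le h fun k hk => Nat.testBit_lt_two_pow ((Nat.lt_of_succ_le hk).trans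
    Nat.lt_two_pow_self), radProd_eq_neg_one_pow, walsh]

lemma measurable_walsh (n : ℕ) : Measurable (walsh n) := by
  simpa only [funext (walsh_eq_radProd n.lt_succ_self)] using measurable_radProd (n + 1) _

lemma abs_walsh (n : ℕ) (x : WG) : |walsh n x| = 1 := by
  rw [walsh_eq_radProd n.lt_succ_self, abs_radProd]

lemma walsh_mul_walsh (a b : ℕ) (x : WG) : walsh a x * walsh b x = walsh (a ^^^ b) x := by
  obtain ⟨N, ha, hb, hab⟩ : ∃ N, a < N ∧ b < N ∧ a ^^^ b < N :=
    ⟨a + b + (a ^^^ b) + 1, by omega, by omega, by omega⟩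
  rw [walsh_eq_radProd ha, walsh_eq_radProd hb, walsh_eq_radProd hab, radProd_mul_radProd]
  simp only [← Nat.testBit_xor]

lemma IsHaar.integral_walsh (hμ : IsHaar μ) (n : ℕ) :
    ∫ x, walsh n x ∂μ = if n = 0 then 1 else 0 := by
  simp_rw [walsh_eq_radProd n.lt_succ_self, hμ.integral_radProd]
  congr 1
  refine propext ⟨fun h => Nat.eq_of_testBit_eq fun i => ?_, fun h => by simp [h]⟩
  by_cases hi : i < n + 1
  · simpa using h i hi
  · simpa using (Nat.testBit_lt_two_pow ((show n < i by omega).trans Nat.lt_two_pow_self)).symm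

lemma IsHaar.integral_walsh_mul_walsh (hμ : IsHaar μ) (a b : ℕ) :
    ∫ x, walsh a x * walsh b x ∂μ = if a = b then 1 else 0 := by
  simp only [walsh_mul_walsh, hμ.integral_walsh, Nat.xor_eq_zero_iff]

lemma IsHaar.integrable_walsh (hμ : IsHaar μ) (n : ℕ) : Integrable (walsh n) μ :=
  have := hμ.isProbabilityMeasure
  (integrable_const (1 : ℝ)).mono' (measurable_walsh n).aestronglyMeasurable
    (.of_forall fun x => by simp [abs_walsh])

lemma MeasureTheory.Integrable.mul_walsh {F : WG → ℝ} (hF : Integrable F μ) (j : ℕ) :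
    Integrable (fun x => F x * walsh j x) μ :=
  hF.mul_bdd (measurable_walsh j).aestronglyMeasurable (c := 1)
    (.of_forall fun x => by simp [abs_walsh])

def ofBits : ℕ → (ℕ → Bool) → ℕ
  | 0, _ => 0
  | N + 1, ε => Nat.bit (ε 0) (ofBits N fun j => ε (j + 1))

lemma ofBits_lt_two_pow (N : ℕ) (ε : ℕ → Bool) : ofBits N ε < 2 ^ N := by
  induction N generalizing ε with
  | zero => simp [ofBits]
  | succ N ih => simpa [ofBits] using ih _

lemma testBit_ofBits (N : ℕ) (ε : ℕ → Bool) (j : ℕ) :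
    (ofBits N ε).testBit j = (decide (j < N) && ε j) := by
  induction N generalizing ε j with
  | zero => simp [ofBits]
  | succ N ih =>
    cases j with
    | zero => simp [ofBits]
    | succ j => simp [ofBits, Nat.testBit_bit_succ, ih]

/-- The binary digits of `κ_n` as a Walsh function: the digits of `n` below the leading one,
in reversed order. -/
def kaczBits (n j : ℕ) : Bool :=
  if j = Nat.log 2 n then n != 0
  else if j < Nat.log 2 n then n.testBit (Nat.log 2 n - 1 - j) else false

def kaczIdx (n : ℕ) : ℕ := ofBits (Nat.log 2 n + 1) (kaczBits n)

lemma testBit_kaczIdx (n j : ℕ) : (kaczIdx n).testBit j = kaczBits n j := by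
  rw [kaczIdx, testBit_ofBits]
  by_cases h : j < Nat.log 2 n + 1
  · simp [h]
  · simp [h, kaczBits, show j ≠ Nat.log 2 n by omega, show ¬ j < Nat.log 2 n by omega]

lemma kaczIdx_zero : kaczIdx 0 = 0 :=
  Nat.eq_of_testBit_eq fun j => by simp [testBit_kaczIdx, kaczBits]

lemma kaczBits_of_lt {n j : ℕ} (hj : j < Nat.log 2 n) :
    kaczBits n j = n.testBit (Nat.log 2 n - 1 - j) := by
  simp [kaczBits, hj.ne, hj]

lemma kacz_eq_radProd (n : ℕ) (x : WG) :
    kacz n x = radProd (Nat.log 2 n + 1) (kaczBits n) x := by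
  rcases eq_or_ne n 0 with rfl | hn
  · simp [kacz, radProd, kaczBits]
  have hlead : kaczBits n (Nat.log 2 n) = true := by simpa [kaczBits] using hn
  rw [radProd, prod_range_succ, ← radProd, hlead, if_pos rfl, kacz, if_neg hn, mul_comm,
    radProd_eq_neg_one_pow]
  congr 2
  refine sum_nbij' (fun k => Nat.log 2 n - 1 - k) (fun k => Nat.log 2 n - 1 - k)
    ?_ ?_ ?_ ?_ fun k hk => ?_ <;> simp only [mem_range] at * <;> try omega
  rw [kaczBits_of_lt (by omega), show Nat.log 2 n - 1 - (Nat.log 2 n - 1 - k) = k by omega]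

lemma kacz_eq_walsh_kaczIdx (n : ℕ) : kacz n = walsh (kaczIdx n) := by
  funext x
  have hbits : (kaczIdx n).testBit = kaczBits n := funext (testBit_kaczIdx n)
  rw [kacz_eq_radProd, walsh_eq_radProd (n := kaczIdx n) (ofBits_lt_two_pow _ _), hbits,
    radProd_of_le Nat.lt_two_pow_self.le]
  intro k hk
  simp [kaczBits, show k ≠ Nat.log 2 n by omega, show ¬ k < Nat.log 2 n by omega]

lemma testBit_log_two_self {n : ℕ} (hn : n ≠ 0) : n.testBit (Nat.log 2 n) = true := by
  have hlo := Nat.pow_log_le_self 2 hn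
  have hhi : n - 2 ^ Nat.log 2 n < 2 ^ Nat.log 2 n := by
    have := Nat.lt_pow_succ_log_self one_lt_two n
    rw [pow_succ] at this
    omega
  simpa [Nat.add_sub_of_le hlo, Nat.testBit_lt_two_pow hhi] using
    Nat.testBit_two_pow_add_eq (n - 2 ^ Nat.log 2 n) (Nat.log 2 n)

lemma log_two_kaczIdx {n : ℕ} (hn : n ≠ 0) : Nat.log 2 (kaczIdx n) = Nat.log 2 n := by
  refine Nat.log_eq_of_pow_le_of_lt_pow (Nat.ge_two_pow_of_testBit ?_) (ofBits_lt_two_pow _ _)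
  simpa [testBit_kaczIdx, kaczBits] using hn

lemma kaczIdx_involutive : Function.Involutive kaczIdx := by
  intro n
  rcases eq_or_ne n 0 with rfl | hn
  · rw [kaczIdx_zero, kaczIdx_zero]
  have hn' : kaczIdx n ≠ 0 := fun h => by
    simpa [h, kaczBits, hn] using testBit_kaczIdx n (Nat.log 2 n)
  refine Nat.eq_of_testBit_eq fun j => ?_
  rw [testBit_kaczIdx]
  rcases lt_trichotomy j (Nat.log 2 n) with hj | rfl | hj
  · rw [kaczBits_of_lt (by rwa [log_two_kaczIdx hn]), log_two_kaczIdx hn, testBit_kaczIdx,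
      kaczBits_of_lt (by omega), show Nat.log 2 n - 1 - (Nat.log 2 n - 1 - j) = j by omega]
  · simp [kaczBits, log_two_kaczIdx hn, hn', testBit_log_two_self hn]
  · rw [Nat.testBit_lt_two_pow ((Nat.lt_pow_succ_log_self one_lt_two n).trans_le
      (Nat.pow_le_pow_right two_pos hj))]
    simp [kaczBits, log_two_kaczIdx hn, hj.ne', not_lt.2 hj.le]

lemma kaczIdx_lt_two_pow {i m : ℕ} (h : i < 2 ^ m) : kaczIdx i < 2 ^ m := by
  rcases eq_or_ne i 0 with rfl | hi
  · rwa [kaczIdx_zero]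
  have hlog : Nat.log 2 i < m := Nat.log_lt_of_lt_pow hi h
  exact (ofBits_lt_two_pow _ _).trans_le (Nat.pow_le_pow_right two_pos hlog)

lemma kaczIdx_lt_two_pow_iff {i m : ℕ} : kaczIdx i < 2 ^ m ↔ i < 2 ^ m :=
  ⟨fun h => kaczIdx_involutive i ▸ kaczIdx_lt_two_pow h, kaczIdx_lt_two_pow⟩

lemma sum_range_two_pow_comp_kaczIdx {M : Type*} [AddCommMonoid M] (m : ℕ) (φ : ℕ → M) :
    ∑ i ∈ range (2 ^ m), φ (kaczIdx i) = ∑ j ∈ range (2 ^ m), φ j :=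
  sum_nbij' kaczIdx kaczIdx (fun _ h => by simpa using kaczIdx_lt_two_pow (mem_range.1 h))
    (fun _ h => by simpa using kaczIdx_lt_two_pow (mem_range.1 h))
    (fun i _ => kaczIdx_involutive i) (fun i _ => kaczIdx_involutive i) fun _ _ => rfl

lemma measurable_partialW (N : ℕ) (g : WG → ℝ) :
    Measurable (partialW μ N g) :=
  Finset.measurable_sum _ fun j _ => (measurable_walsh j).const_mul _

lemma fhatW_const_mul (c : ℝ) (g : WG → ℝ) (j : ℕ) :
    fhatW μ (fun x => c * g x) j = c * fhatW μ g j := by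
  simp only [fhatW, mul_assoc, integral_const_mul]

lemma partialW_const_mul (N : ℕ) (c : ℝ) (g : WG → ℝ) (x : WG) :
    partialW μ N (fun x => c * g x) x = c * partialW μ N g x := by
  simp only [partialW, fhatW_const_mul, mul_sum, mul_assoc]

lemma fhatW_sum {ι : Type*} (s : Finset ι) {g : ι → WG → ℝ}
    (hg : ∀ i ∈ s, Integrable (g i) μ) (j : ℕ) :
    fhatW μ (fun x => ∑ i ∈ s, g i x) j = ∑ i ∈ s, fhatW μ (g i) j := by
  simp only [fhatW, sum_mul]
  exact integral_finsetSum s fun i hi => (hg i hi).mul_walsh j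

lemma fhatW_sub {F G : WG → ℝ} (hF : Integrable F μ) (hG : Integrable G μ) (j : ℕ) :
    fhatW μ (fun x => F x - G x) j = fhatW μ F j - fhatW μ G j := by
  simp only [fhatW, sub_mul]
  exact integral_sub (hF.mul_walsh j) (hG.mul_walsh j)

lemma IsHaar.fhatW_walsh (hμ : IsHaar μ) (e j : ℕ) :
    fhatW μ (walsh e) j = if e = j then 1 else 0 :=
  hμ.integral_walsh_mul_walsh e j

lemma IsHaar.fhatW_partialW (hμ : IsHaar μ) (N : ℕ) (F : WG → ℝ) (j : ℕ) :
    fhatW μ (partialW μ N F) j = if j < N then fhatW μ F j else 0 := by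
  unfold partialW
  rw [fhatW_sum _ fun i _ => (hμ.integrable_walsh i).const_mul _]
  simp [fhatW_const_mul, hμ.fhatW_walsh]

lemma IsHaar.partialW_partialW (hμ : IsHaar μ) (M N : ℕ) (F : WG → ℝ) :
    partialW μ M (partialW μ N F) = partialW μ (min M N) F := by
  ext x
  simp only [partialW, hμ.fhatW_partialW, ite_mul, zero_mul, ← sum_filter]
  congr 1
  ext j
  simp

lemma partialW_sum {ι : Type*} (N : ℕ) (s : Finset ι) {g : ι → WG → ℝ}
    (hg : ∀ i ∈ s, Integrable (g i) μ) (x : WG) :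
    partialW μ N (fun x => ∑ i ∈ s, g i x) x = ∑ i ∈ s, partialW μ N (g i) x := by
  simp only [partialW, fhatW_sum s hg, sum_mul]
  exact sum_comm

lemma partialW_sub (N : ℕ) {F G : WG → ℝ} (hF : Integrable F μ) (hG : Integrable G μ)
    (x : WG) : partialW μ N (fun x => F x - G x) x = partialW μ N F x - partialW μ N G x := by
  simp only [partialW, fhatW_sub hF hG, sub_mul, sum_sub_distrib]

lemma IsHaar.partialW_walsh (hμ : IsHaar μ) (N e : ℕ) (x : WG) :
    partialW μ N (walsh e) x = if e < N then walsh e x else 0 := by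
  simp [partialW, hμ.fhatW_walsh]

lemma IsHaar.partialW_kacz (hμ : IsHaar μ) (m i : ℕ) (x : WG) :
    partialW μ (2 ^ m) (kacz i) x = if i < 2 ^ m then kacz i x else 0 := by
  simp only [kacz_eq_walsh_kaczIdx, hμ.partialW_walsh, kaczIdx_lt_two_pow_iff]

lemma IsHaar.integrable_kacz (hμ : IsHaar μ) (n : ℕ) : Integrable (kacz n) μ :=
  kacz_eq_walsh_kaczIdx n ▸ hμ.integrable_walsh _

/-- The martingale `f − S_{2^k} f`. -/
def tailMart (f : ℕ → WG → ℝ) (k : ℕ) : ℕ → WG → ℝ := fun m x => f m x - f (min m k) x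

lemma fhatK_eq_fhatW (g : WG → ℝ) (i : ℕ) :
    fhatK μ g i = fhatW μ g (kaczIdx i) := by
  simp only [fhatK, fhatW, kacz_eq_walsh_kaczIdx]

namespace IsDyadicMartingale

lemma partialW_eq (hf : IsDyadicMartingale μ f) {m n : ℕ} (h : m ≤ n) :
    partialW μ (2 ^ m) (f n) = f m :=
  funext (hf.2 m n h)

lemma partialW_of_le (hμ : IsHaar μ) (hf : IsDyadicMartingale μ f) {k m : ℕ} (h : k ≤ m) :
    partialW μ (2 ^ m) (f k) = f k := by
  conv_lhs => rw [← hf.partialW_eq le_rfl]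
  rw [hμ.partialW_partialW, min_eq_right (Nat.pow_le_pow_right two_pos h),
    hf.partialW_eq le_rfl]

lemma fhatW_eq (hμ : IsHaar μ) (hf : IsDyadicMartingale μ f) {k n e : ℕ} (hkn : k ≤ n)
    (he : e < 2 ^ k) : fhatW μ (f k) e = fhatW μ (f n) e := by
  rw [← hf.partialW_eq hkn, hμ.fhatW_partialW, if_pos he]

lemma fhatK_eq (hμ : IsHaar μ) (hf : IsDyadicMartingale μ f) (k i : ℕ) :
    fhatK μ (f k) i = if i < 2 ^ k then fhatKMart μ f i else 0 := by
  have hi : i < 2 ^ (i + 1) := (Nat.lt_succ_self i).trans Nat.lt_two_pow_self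
  rw [fhatK_eq_fhatW, ← hf.partialW_eq le_rfl, hμ.fhatW_partialW]
  simp only [kaczIdx_lt_two_pow_iff]
  split_ifs with h
  · rw [fhatKMart, ← fhatK, fhatK_eq_fhatW,
      hf.fhatW_eq hμ (le_max_left k (i + 1)) (kaczIdx_lt_two_pow_iff.2 h),
      hf.fhatW_eq hμ (le_max_right k (i + 1)) (kaczIdx_lt_two_pow hi)]
  · rfl

lemma eq_sum_kacz (hμ : IsHaar μ) (hf : IsDyadicMartingale μ f) (m : ℕ) (x : WG) :
    f m x = ∑ i ∈ range (2 ^ m), fhatKMart μ f i * kacz i x := by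
  rw [← hf.2 m m le_rfl x, partialW,
    ← sum_range_two_pow_comp_kaczIdx m fun j => fhatW μ (f m) j * walsh j x]
  refine sum_congr rfl fun i hi => ?_
  rw [← fhatK_eq_fhatW, hf.fhatK_eq hμ, if_pos (mem_range.1 hi), kacz_eq_walsh_kaczIdx]

lemma tail (hμ : IsHaar μ) (hf : IsDyadicMartingale μ f) (k : ℕ) :
    IsDyadicMartingale μ (tailMart f k) := by
  refine ⟨fun m => (hf.1 m).sub (hf.1 _), fun m n hmn x => ?_⟩
  change partialW μ (2 ^ m) (fun x => f n x - f (min n k) x) x = f m x - f (min m k) x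
  rw [partialW_sub _ (hf.1 n) (hf.1 _), hf.2 m n hmn x]
  congr 1
  rcases le_total m k with hmk | hkm
  · rw [min_eq_left hmk, hf.2 m _ (le_min hmn hmk)]
  · rw [min_eq_right hkm, min_eq_right (hkm.trans hmn), hf.partialW_of_le hμ hkm]

lemma fhatKMart_tailMart (hμ : IsHaar μ) (hf : IsDyadicMartingale μ f) (k i : ℕ) :
    fhatKMart μ (tailMart f k) i = if i < 2 ^ k then 0 else fhatKMart μ f i := by
  have hi : i < 2 ^ (k + i + 1) :=
    (show i < k + i + 1 by omega).trans Nat.lt_two_pow_self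
  have htail := (hf.tail hμ k).fhatK_eq hμ (k + i + 1) i
  rw [if_pos hi] at htail
  rw [← htail, fhatK_eq_fhatW]
  change fhatW μ (fun x => f (k + i + 1) x - f (min (k + i + 1) k) x) _ = _
  rw [min_eq_right (by omega : k ≤ k + i + 1),
    fhatW_sub (hf.1 _) (hf.1 _), ← fhatK_eq_fhatW, ← fhatK_eq_fhatW, hf.fhatK_eq hμ,
    hf.fhatK_eq hμ, if_pos hi]
  split_ifs <;> ring

end IsDyadicMartingale

lemma sum_Icc_sum_range {M : Type*} [AddCommMonoid M] (n : ℕ) (t : ℕ → M) :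
    ∑ j ∈ Icc 1 n, ∑ i ∈ range j, t i = ∑ i ∈ range n, (n - i) • t i := by
  induction n with
  | zero => simp
  | succ n ih =>
    rw [sum_Icc_succ_top (by omega), ih, sum_range_succ (fun i => (n + 1 - i) • t i),
      sum_range_succ t, Nat.add_sub_cancel_left, one_smul, ← add_assoc, ← sum_add_distrib]
    congr 1
    refine sum_congr rfl fun i hi => ?_
    rw [Nat.sub_add_comm (mem_range.1 hi).le, succ_nsmul]

lemma sum_range_ite_lt {M : Type*} [AddCommMonoid M] (K N : ℕ) (g : ℕ → M) :
    ∑ i ∈ range K, (if i < N then g i else 0) = ∑ i ∈ range (min K N), g i := by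
  rw [← sum_filter]
  congr 1
  ext i
  simp

lemma sum_range_natSub_mul {R n : ℕ} (h : R ≤ n) (t : ℕ → ℝ) :
    ∑ i ∈ range R, ((n - i : ℕ) : ℝ) * t i =
      n * ∑ i ∈ range R, t i - ∑ i ∈ range R, i * t i := by
  rw [mul_sum, ← sum_sub_distrib]
  refine sum_congr rfl fun i hi => ?_
  rw [Nat.cast_sub ((mem_range.1 hi).le.trans h)]
  ring

lemma IsHaar.partialW_sigmaKMart (hμ : IsHaar μ) (n m : ℕ) (F : ℕ → WG → ℝ) (x : WG) :
    partialW μ (2 ^ m) (sigmaKMart μ n F) x = (1 / n : ℝ) *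
      ∑ i ∈ range (min n (2 ^ m)), ((n - i : ℕ) : ℝ) * (fhatKMart μ F i * kacz i x) := by
  have hσ : sigmaKMart μ n F = fun x => (1 / n : ℝ) *
      ∑ i ∈ range n, ((n - i : ℕ) * fhatKMart μ F i : ℝ) * kacz i x := by
    ext x
    simp only [sigmaKMart, sum_Icc_sum_range, nsmul_eq_mul, mul_assoc]
  rw [hσ, partialW_const_mul,
    partialW_sum _ _ fun i _ => (hμ.integrable_kacz i).const_mul _, ← sum_range_ite_lt]
  simp only [partialW_const_mul, hμ.partialW_kacz, mul_ite, mul_zero, mul_assoc]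

/-- The martingale of `σ_n^κ f − f`. -/
def fejerErr (μ : Measure WG) (n : ℕ) (f : ℕ → WG → ℝ) : ℕ → WG → ℝ :=
  fun m x => partialW μ (2 ^ m) (sigmaKMart μ n f) x - f m x

namespace IsDyadicMartingale

lemma fejerErr_eq (hμ : IsHaar μ) (hf : IsDyadicMartingale μ f) {n m : ℕ} (h : 2 ^ m ≤ n)
    (x : WG) : fejerErr μ n f m x =
      -(1 / n * ∑ i ∈ range (2 ^ m), (i : ℝ) * (fhatKMart μ f i * kacz i x)) := by
  have hn : (n : ℝ) ≠ 0 := Nat.cast_ne_zero.2 ((pow_pos two_pos m).trans_le h).ne'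
  rw [fejerErr, hμ.partialW_sigmaKMart, min_eq_right h, hf.eq_sum_kacz hμ m,
    sum_range_natSub_mul h]
  field_simp
  ring

lemma fejerErr_sub_fejerErr_tail (hμ : IsHaar μ) (hf : IsDyadicMartingale μ f) {n k : ℕ}
    (hk : 2 ^ k ≤ n) (m : ℕ) (x : WG) :
    fejerErr μ n f m x - fejerErr μ n (tailMart f k) m x =
      -(1 / n * ∑ i ∈ range (2 ^ min m k), (i : ℝ) * (fhatKMart μ f i * kacz i x)) := by
  have hn : (n : ℝ) ≠ 0 := Nat.cast_ne_zero.2 ((pow_pos two_pos k).trans_le hk).ne'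
  have hkm := Nat.pow_le_pow_right two_pos (min_le_right m k)
  have hR : min (min n (2 ^ m)) (2 ^ k) = 2 ^ min m k := by
    rw [min_assoc, ← (pow_right_mono₀ one_le_two).map_min, min_eq_right (hkm.trans hk)]
  have hσ : partialW μ (2 ^ m) (sigmaKMart μ n f) x
      - partialW μ (2 ^ m) (sigmaKMart μ n (tailMart f k)) x =
        1 / n * ∑ i ∈ range (2 ^ min m k),
          ((n - i : ℕ) : ℝ) * (fhatKMart μ f i * kacz i x) := by
    rw [hμ.partialW_sigmaKMart, hμ.partialW_sigmaKMart, ← mul_sub, ← sum_sub_distrib, ← hR,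
      ← sum_range_ite_lt (min n (2 ^ m)) (2 ^ k)]
    congr 1
    refine sum_congr rfl fun i _ => ?_
    rw [hf.fhatKMart_tailMart hμ]
    split_ifs <;> ring
  calc fejerErr μ n f m x - fejerErr μ n (tailMart f k) m x
      = (partialW μ (2 ^ m) (sigmaKMart μ n f) x
          - partialW μ (2 ^ m) (sigmaKMart μ n (tailMart f k)) x) - f (min m k) x := by
        simp only [fejerErr, tailMart]
        ring
    _ = _ := by
        rw [hσ, hf.eq_sum_kacz hμ (min m k) x, sum_range_natSub_mul (hkm.trans hk)]
        field_simp
        ring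

lemma fejerErr_eq_add (hμ : IsHaar μ) (hf : IsDyadicMartingale μ f) {n k : ℕ}
    (hk : 2 ^ k ≤ n) (m : ℕ) (x : WG) :
    fejerErr μ n f m x =
      fejerErr μ n (tailMart f k) m x + (2 ^ k / n : ℝ) * fejerErr μ (2 ^ k) f (min m k) x := by
  have hn : (n : ℝ) ≠ 0 := Nat.cast_ne_zero.2 ((pow_pos two_pos k).trans_le hk).ne'
  rw [eq_add_of_sub_eq' (hf.fejerErr_sub_fejerErr_tail hμ hk m x),
    hf.fejerErr_eq hμ (Nat.pow_le_pow_right two_pos (min_le_right m k))]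
  push_cast
  field_simp

end IsDyadicMartingale

/-- `‖F‖_{H_p}^p`, which unlike `HpNorm` is subadditive for `p ≤ 1`. -/
def HpNormPow (μ : Measure WG) (p : ℝ) (F : ℕ → WG → ℝ) : ℝ≥0∞ :=
  ∫⁻ x, (⨆ n, (‖F n x‖₊ : ℝ≥0∞)) ^ p ∂μ

lemma HpNormPow_eq_HpNorm_rpow (hp : 0 < p) (F : ℕ → WG → ℝ) :
    HpNormPow μ p F = HpNorm μ p F ^ p := by
  rw [HpNorm, ← HpNormPow, one_div, ENNReal.rpow_inv_rpow hp.ne']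

lemma HpNormPow_le_add (hp0 : 0 ≤ p) (hp1 : p ≤ 1) {X Y Z : ℕ → WG → ℝ}
    (hZ : ∀ m x, ‖Z m x‖ ≤ ‖X m x‖ + ‖Y m x‖) (hX : ∀ m, AEStronglyMeasurable (X m) μ) :
    HpNormPow μ p Z ≤ HpNormPow μ p X + HpNormPow μ p Y := by
  have hsup (x : WG) : ⨆ m, (‖Z m x‖₊ : ℝ≥0∞) ≤
      (⨆ m, (‖X m x‖₊ : ℝ≥0∞)) + ⨆ m, (‖Y m x‖₊ : ℝ≥0∞) :=
    iSup_le fun m => (show (‖Z m x‖₊ : ℝ≥0∞) ≤ ‖X m x‖₊ + ‖Y m x‖₊ by exact_mod_cast hZ m x).trans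
      (add_le_add (le_iSup (fun m => (‖X m x‖₊ : ℝ≥0∞)) m) (le_iSup (fun m => (‖Y m x‖₊ : ℝ≥0∞)) m))
  calc HpNormPow μ p Z
      ≤ ∫⁻ x, (⨆ m, (‖X m x‖₊ : ℝ≥0∞)) ^ p + (⨆ m, (‖Y m x‖₊ : ℝ≥0∞)) ^ p ∂μ :=
        lintegral_mono fun x =>
          (ENNReal.rpow_le_rpow (hsup x) hp0).trans (ENNReal.rpow_add_le_add_rpow _ _ hp0 hp1)
    _ = HpNormPow μ p X + HpNormPow μ p Y :=
        lintegral_add_left' ((AEMeasurable.iSup fun m =>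
          (hX m).nnnorm.aemeasurable.coe_nnreal_ennreal).pow_const p) _

lemma HpNormPow_const_mul (hp : 0 ≤ p) (c : ℝ) (X : ℕ → WG → ℝ) :
    HpNormPow μ p (fun m x => c * X m x) = (‖c‖₊ : ℝ≥0∞) ^ p * HpNormPow μ p X := by
  rw [HpNormPow, HpNormPow, ← lintegral_const_mul' _ _ (ENNReal.rpow_ne_top_of_nonneg hp
    ENNReal.coe_ne_top)]
  congr 1
  funext x
  simp only [nnnorm_mul, ENNReal.coe_mul, ← ENNReal.mul_rpow_of_nonneg _ _ hp, ENNReal.mul_iSup]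

lemma HpNormPow_comp_le (hp : 0 ≤ p) (φ : ℕ → ℕ) (X : ℕ → WG → ℝ) :
    HpNormPow μ p (fun m => X (φ m)) ≤ HpNormPow μ p X :=
  lintegral_mono fun x => ENNReal.rpow_le_rpow
    (iSup_le fun m => le_iSup (fun m => (‖X m x‖₊ : ℝ≥0∞)) (φ m)) hp

lemma ENNReal.le_pow_mul_add_of_le_add_mul {u : ℕ → ℝ≥0∞} {q σ : ℝ≥0∞} (hq : q ≤ 1)
    (hrec : ∀ k, u (k + 1) ≤ (1 - q) * σ + q * u k) (k : ℕ) : u k ≤ q ^ k * u 0 + σ := by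
  induction k with
  | zero => simp
  | succ k ih =>
    calc u (k + 1) ≤ (1 - q) * σ + q * (q ^ k * u 0 + σ) := (hrec k).trans (by gcongr)
      _ = q ^ (k + 1) * u 0 + ((1 - q) * σ + q * σ) := by ring
      _ = q ^ (k + 1) * u 0 + σ := by rw [← add_mul, tsub_add_cancel_of_le hq, one_mul]

lemma ENNReal.tendsto_zero_of_le_add_mul {u b : ℕ → ℝ≥0∞} {q : ℝ≥0∞} (hq : q < 1)
    (hu : ∀ k, u k ≠ ∞) (hrec : ∀ k, u (k + 1) ≤ b k + q * u k)
    (hb : Tendsto b atTop (nhds 0)) : Tendsto u atTop (nhds 0) := by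
  rw [ENNReal.tendsto_nhds_zero] at hb ⊢
  intro ε hε
  have hσ : 0 < ε / 2 := ENNReal.div_pos hε.ne' ofNat_ne_top
  obtain ⟨K, hK⟩ := eventually_atTop.1
    (hb _ (ENNReal.mul_pos (tsub_pos_of_lt hq).ne' hσ.ne'))
  have hbound := ENNReal.le_pow_mul_add_of_le_add_mul (u := fun j => u (K + j)) hq.le
    fun j => (hrec (K + j)).trans (add_le_add_left (hK _ (by omega)) _)
  have hpow : Tendsto (fun j => q ^ j * u K) atTop (nhds 0) := by
    simpa using ENNReal.Tendsto.mul_const (ENNReal.tendsto_pow_atTop_nhds_zero_of_lt_one hq)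
      (Or.inr (hu K))
  obtain ⟨J, hJ⟩ := eventually_atTop.1 (ENNReal.tendsto_nhds_zero.1 hpow _ hσ)
  refine eventually_atTop.2 ⟨K + J, fun k hk => ?_⟩
  obtain ⟨j, rfl⟩ := Nat.exists_eq_add_of_le (show K ≤ k by omega)
  calc u (K + j) ≤ q ^ j * u (K + 0) + ε / 2 := hbound j
    _ ≤ ε / 2 + ε / 2 := add_le_add (by simpa using hJ j (by omega)) le_rfl
    _ = ε := ENNReal.add_halves ε

lemma ENNReal.tendsto_zero_of_le_add_dyadic {a b : ℕ → ℝ≥0∞} (hp : 0 < p)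
    (ha : ∀ k, a (2 ^ k) ≠ ∞) (hb : Tendsto b atTop (nhds 0))
    (hstep : ∀ k n, 2 ^ k < n → n ≤ 2 ^ (k + 1) →
      a n ≤ b k + ENNReal.ofReal (2 ^ k / n) ^ p * a (2 ^ k)) :
    Tendsto a atTop (nhds 0) := by
  have hrec (k : ℕ) : a (2 ^ (k + 1)) ≤ b k + ENNReal.ofReal 2⁻¹ ^ p * a (2 ^ k) := by
    convert hstep k _ (Nat.pow_lt_pow_succ Nat.one_lt_two) le_rfl using 4
    push_cast
    rw [pow_succ]
    field_simp
  have hu := ENNReal.tendsto_zero_of_le_add_mul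
    (ENNReal.rpow_lt_one (ENNReal.ofReal_lt_one.2 (by norm_num)) hp) ha hrec hb
  have hlog : Tendsto (fun n => Nat.log 2 (n - 1)) atTop atTop :=
    tendsto_atTop_atTop.2 fun M =>
      ⟨2 ^ M + 1, fun n hn => Nat.le_log_of_pow_le Nat.one_lt_two (by omega)⟩
  refine tendsto_of_tendsto_of_tendsto_of_le_of_le' tendsto_const_nhds
    (by simpa using (hb.add hu).comp hlog) (.of_forall fun _ => zero_le) ?_
  filter_upwards [eventually_ge_atTop 2] with n hn
  have hlo : 2 ^ Nat.log 2 (n - 1) < n := by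
    have := Nat.pow_log_le_self 2 (x := n - 1) (by omega)
    omega
  have hhi : n ≤ 2 ^ (Nat.log 2 (n - 1) + 1) := by
    have := Nat.lt_pow_succ_log_self Nat.one_lt_two (n - 1)
    omega
  refine (hstep _ n hlo hhi).trans (add_le_add le_rfl ?_)
  refine mul_le_of_le_one_left zero_le (ENNReal.rpow_le_one ?_ hp.le)
  rw [ENNReal.ofReal_le_one, div_le_one (by positivity)]
  exact_mod_cast hlo.le

lemma ofReal_mul_rpow_le_of_le_two_pow {c e : ℝ} (he : 0 ≤ e) {n k : ℕ} (hn : n ≤ 2 ^ (k + 1)) :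
    ENNReal.ofReal (c * n ^ e) ≤
      ENNReal.ofReal (|c| * 2 ^ e) * ENNReal.ofReal (2 ^ ((k : ℝ) * e)) := by
  rw [← ENNReal.ofReal_mul (by positivity)]
  refine ENNReal.ofReal_le_ofReal ?_
  calc c * (n : ℝ) ^ e ≤ |c| * ((2 : ℝ) ^ ((k : ℝ) + 1)) ^ e := by
        gcongr
        · exact le_abs_self c
        · exact_mod_cast hn
    _ = |c| * 2 ^ e * 2 ^ ((k : ℝ) * e) := by
        rw [← Real.rpow_mul zero_le_two, add_mul, one_mul, add_comm,
          Real.rpow_add two_pos, mul_assoc]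

namespace IsDyadicMartingale

lemma HpNormPow_fejerErr_le (hμ : IsHaar μ) (hf : IsDyadicMartingale μ f) (hp0 : 0 < p)
    (hp1 : p ≤ 1) {n k : ℕ} (hk : 2 ^ k ≤ n) {A : ℝ≥0∞}
    (hA : HpNormFn μ p (sigmaKMart μ n (tailMart f k)) ≤ A * omegaHp μ p f k) :
    HpNormPow μ p (fejerErr μ n f) ≤ (A * omegaHp μ p f k) ^ p + omegaHp μ p f k ^ p +
      ENNReal.ofReal (2 ^ k / n) ^ p * HpNormPow μ p (fejerErr μ (2 ^ k) f) := by
  have htail : HpNormPow μ p (fejerErr μ n (tailMart f k)) ≤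
      (A * omegaHp μ p f k) ^ p + omegaHp μ p f k ^ p := by
    refine (HpNormPow_le_add hp0.le hp1 (fun m x => norm_sub_le _ _)
      fun m => (measurable_partialW _ _).aestronglyMeasurable).trans (add_le_add ?_ ?_)
    · exact (HpNormPow_eq_HpNorm_rpow hp0 _).trans_le (ENNReal.rpow_le_rpow hA hp0.le)
    · exact (HpNormPow_eq_HpNorm_rpow hp0 _).le
  have hscaled : HpNormPow μ p (fun m x => (2 ^ k / n : ℝ) * fejerErr μ (2 ^ k) f (min m k) x) ≤
      ENNReal.ofReal (2 ^ k / n) ^ p * HpNormPow μ p (fejerErr μ (2 ^ k) f) := by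
    rw [HpNormPow_const_mul hp0.le, ← enorm_eq_nnnorm, Real.enorm_of_nonneg (by positivity)]
    gcongr
    exact HpNormPow_comp_le hp0.le (min · k) _
  refine (HpNormPow_le_add hp0.le hp1 (fun m x => ?_) fun m => ?_).trans
    (add_le_add htail hscaled)
  · rw [hf.fejerErr_eq_add hμ hk m x]
    exact norm_add_le _ _
  · exact (measurable_partialW _ _).aestronglyMeasurable.sub
      ((hf.tail hμ k).1 m).aestronglyMeasurable

end IsDyadicMartingale

lemma HpNormPow_fejerErr_ne_top (hp0 : 0 < p) (hp1 : p ≤ 1) {n : ℕ}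
    (hσ : HpNormFn μ p (sigmaKMart μ n f) ≠ ∞) (hf : HpNorm μ p f ≠ ∞) :
    HpNormPow μ p (fejerErr μ n f) ≠ ∞ := by
  refine ne_top_of_le_ne_top ?_ (HpNormPow_le_add hp0.le hp1 (fun m x => norm_sub_le _ _)
    fun m => (measurable_partialW _ _).aestronglyMeasurable)
  rw [HpNormPow_eq_HpNorm_rpow hp0, HpNormPow_eq_HpNorm_rpow hp0]
  exact ENNReal.add_ne_top.2 ⟨ENNReal.rpow_ne_top_of_nonneg hp0.le hσ,
    ENNReal.rpow_ne_top_of_nonneg hp0.le hf⟩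

lemma ENNReal.tendsto_ofReal_two_rpow_mul {v : ℕ → ℝ≥0∞} {e : ℝ}
    (h : Tendsto (fun k : ℕ => v k / ENNReal.ofReal ((2 : ℝ) ^ (-(k : ℝ) * e))) atTop (nhds 0)) :
    Tendsto (fun k : ℕ => ENNReal.ofReal (2 ^ ((k : ℝ) * e)) * v k) atTop (nhds 0) :=
  h.congr fun k => by
    rw [div_eq_mul_inv, neg_mul, Real.rpow_neg zero_le_two,
      ENNReal.ofReal_inv_of_pos (by positivity), inv_inv, mul_comm]

end
/-- If `‖σ_n^κ f‖_{H_p} ≤ c_p n^{1/p−2} log^{2⌊1/2+p⌋}(n+1) ‖f‖_{H_p}` holds on `H_p`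
and `ω_{H_p}(1/2^k, f) = o(2^{−k(1/p−2)})`, then `‖σ_n^κ f − f‖_{H_p} → 0`. -/
theorem convergence_from_modulus (μ : Measure WG) (hμ : IsHaar μ) (p : ℝ)
    (hp1 : 0 < p) (hp2 : p < 1 / 2) (cp : ℝ)
    (hbound : ∀ g : ℕ → WG → ℝ, IsDyadicMartingale μ g → ∀ n : ℕ, 1 ≤ n →
      HpNormFn μ p (sigmaKMart μ n g) ≤
        ENNReal.ofReal
            (cp * (n : ℝ) ^ (1 / p - 2) * Real.log (n + 1) ^ (2 * ⌊(1 / 2 : ℝ) + p⌋₊)) *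
          HpNorm μ p g)
    (f : ℕ → WG → ℝ) (hf : IsDyadicMartingale μ f) (hfHp : HpNorm μ p f < ∞)
    (hω : Tendsto
      (fun k : ℕ => omegaHp μ p f k / ENNReal.ofReal ((2 : ℝ) ^ (-(k : ℝ) * (1 / p - 2))))
      atTop (nhds 0)) :
    Tendsto (fun n : ℕ => HpDist μ p (sigmaKMart μ n f) f) atTop (nhds 0) := by
  have hp1' : p ≤ 1 := by linarith
  have he : 0 ≤ 1 / p - 2 := by rw [sub_nonneg, le_div_iff₀ hp1]; linarith
  have hlog : ⌊(1 / 2 : ℝ) + p⌋₊ = 0 := Nat.floor_eq_zero.2 (by linarith)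
  simp only [hlog, mul_zero, pow_zero, mul_one] at hbound
  set w : ℕ → ℝ≥0∞ := fun k => ENNReal.ofReal (2 ^ ((k : ℝ) * (1 / p - 2))) * omegaHp μ p f k
  have hw : Tendsto w atTop (nhds 0) := ENNReal.tendsto_ofReal_two_rpow_mul hω
  have hωw (k : ℕ) : omegaHp μ p f k ≤ w k := le_mul_of_one_le_left zero_le
    (ENNReal.one_le_ofReal.2 (Real.one_le_rpow one_le_two (by positivity)))
  set C := ENNReal.ofReal (|cp| * 2 ^ (1 / p - 2))
  have hb : Tendsto (fun k => (C * w k) ^ p + w k ^ p) atTop (nhds 0) := by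
    simpa [ENNReal.zero_rpow_of_pos hp1] using
      ((ENNReal.Tendsto.const_mul hw (.inr ENNReal.ofReal_ne_top)).ennrpow_const p).add
        (hw.ennrpow_const p)
  have hE : Tendsto (fun n => HpNormPow μ p (fejerErr μ n f)) atTop (nhds 0) := by
    refine ENNReal.tendsto_zero_of_le_add_dyadic hp1 (fun k => ?_) hb fun k n hlo hhi => ?_
    · exact HpNormPow_fejerErr_ne_top hp1 hp1' (ne_top_of_le_ne_top
        (ENNReal.mul_ne_top ENNReal.ofReal_ne_top hfHp.ne) (hbound f hf _ Nat.one_le_two_pow))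
        hfHp.ne
    · have hA := mul_le_mul_left (ofReal_mul_rpow_le_of_le_two_pow (c := cp) he hhi)
        (omegaHp μ p f k)
      rw [mul_assoc] at hA
      have hωk := hωw k
      refine (hf.HpNormPow_fejerErr_le hμ hp1 hp1' hlo.le
        (hbound _ (hf.tail hμ k) n (by omega))).trans ?_
      gcongr ?_ ^ p + ?_ ^ p + _
  have hHp := hE.ennrpow_const (1 / p)
  rwa [ENNReal.zero_rpow_of_pos (one_div_pos.2 hp1)] at hHp
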